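/- The point (t₁,t₂) = (√(5/10), √(9/10)) = (1/√2, 3/√10) is a critical point of F(t₁,t₂) = −(π³/(t₁³t₂³))·[16t₁⁴t₂⁴ − 56(t₁⁴t₂² + t₂⁴t₁²) + 9(t₁⁴ + t₂⁴) − 14t₁²t₂²], and the value there equals (128√5/3)π³. -/

import Mathlib

open Real

/-!
For fixed `t₂`, `F(s, t₂)` is a constant multiple of `(p s⁴ + q s² + r)/s³`, whose derivative at
`a ≠ 0` is `(p a⁴ - q a² - 3r)/a⁴`. Hence `∂₁F(t₁, t₂)` vanishes where a polynomial `Q(t₁², t₂²)`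
does, and, `F` being symmetric, `∂₂F(t₁, t₂)` where `Q(t₂², t₁²)` does; both vanish since
`Q(1/2, 9/10) = Q(9/10, 1/2) = 0`. The value follows from `P(1/2, 9/10) = -144/5` and
`√5 · t₁t₂ = 3/2`.
-/

noncomputable def energy (t₁ t₂ : ℝ) : ℝ :=
  -(π^3/(t₁^3*t₂^3)) *
    (16*t₁^4*t₂^4 - 56*(t₁^4*t₂^2 + t₂^4*t₁^2) + 9*(t₁^4 + t₂^4) - 14*t₁^2*t₂^2)

/-- `P(x, y)`, with `energy t₁ t₂ = -π³ P(t₁², t₂²) / (t₁t₂)³`. -/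
def energyNumerator (x y : ℝ) : ℝ :=
  16*x^2*y^2 - 56*(x^2*y + y^2*x) + 9*(x^2 + y^2) - 14*x*y

/-- `Q = 2x ∂ₓP - 3P`, the numerator of `∂₁ energy`. -/
def energyDerivNumerator (x y : ℝ) : ℝ :=
  16*x^2*y^2 - 56*x^2*y + 56*x*y^2 + 9*x^2 - 27*y^2 + 14*x*y

lemma energy_comm (t₁ t₂ : ℝ) : energy t₁ t₂ = energy t₂ t₁ := by
  unfold energy
  ring

lemma energy_eq_energyNumerator (t₁ t₂ : ℝ) :
    energy t₁ t₂ = -(π^3/(t₁*t₂)^3) * energyNumerator (t₁^2) (t₂^2) := by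
  unfold energy energyNumerator
  ring

lemma hasDerivAt_evenQuartic_div_cube (p q r : ℝ) {a : ℝ} (ha : a ≠ 0) :
    HasDerivAt (fun s => (p*s^4 + q*s^2 + r)/s^3) ((p*a^4 - q*a^2 - 3*r)/a^4) a := by
  have hnum : HasDerivAt (fun s => p*s^4 + q*s^2 + r) (p*(4*a^3) + q*(2*a)) a := by
    simpa using (((hasDerivAt_pow 4 a).const_mul p).add
      ((hasDerivAt_pow 2 a).const_mul q)).add_const r
  have hden : HasDerivAt (fun s => s^3) (3*a^2) a := by
    simpa using hasDerivAt_pow 3 a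
  refine (hnum.div hden (pow_ne_zero 3 ha)).congr_deriv ?_
  field_simp
  ring

lemma hasDerivAt_energy_left (t : ℝ) {a : ℝ} (ha : a ≠ 0) :
    HasDerivAt (fun s => energy s t)
      (-(π^3/t^3) * (energyDerivNumerator (a^2) (t^2) / a^4)) a := by
  have hsplit : (fun s => energy s t) = fun s => -(π^3/t^3) *
      (((16*t^4 - 56*t^2 + 9)*s^4 + (-56*t^4 - 14*t^2)*s^2 + 9*t^4)/s^3) := by
    funext s
    unfold energy
    ring
  rw [hsplit]
  refine ((hasDerivAt_evenQuartic_div_cube _ _ _ ha).const_mul (-(π^3/t^3))).congr_deriv ?_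
  unfold energyDerivNumerator
  ring

lemma deriv_energy_left_eq_zero {a t : ℝ} (ha : a ≠ 0)
    (hQ : energyDerivNumerator (a^2) (t^2) = 0) :
    deriv (fun s => energy s t) a = 0 := by
  rw [(hasDerivAt_energy_left t ha).deriv, hQ]
  simp

lemma deriv_energy_right_eq_zero {a t : ℝ} (ha : a ≠ 0)
    (hQ : energyDerivNumerator (a^2) (t^2) = 0) :
    deriv (fun s => energy t s) a = 0 := by
  simp only [energy_comm t]
  exact deriv_energy_left_eq_zero ha hQ

/-- `(t₁,t₂) = (√(5/10), √(9/10)) = (1/√2, 3/√10)` is a critical point of the energy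
`F(t₁,t₂)`, with value `(128√5/3)π³`. -/
theorem stmt_4 :
    let F : ℝ → ℝ → ℝ := fun t₁ t₂ =>
      -(π^3/(t₁^3*t₂^3)) *
        (16*t₁^4*t₂^4 - 56*(t₁^4*t₂^2 + t₂^4*t₁^2) + 9*(t₁^4 + t₂^4) - 14*t₁^2*t₂^2)
    Real.sqrt (5/10) = 1/Real.sqrt 2 ∧
    Real.sqrt (9/10) = 3/Real.sqrt 10 ∧
    deriv (fun s => F s (Real.sqrt (9/10))) (Real.sqrt (5/10)) = 0 ∧
    deriv (fun s => F (Real.sqrt (5/10)) s) (Real.sqrt (9/10)) = 0 ∧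
    F (Real.sqrt (5/10)) (Real.sqrt (9/10)) = (128*Real.sqrt 5/3)*π^3 := by
  show √(5/10) = 1/√2 ∧ √(9/10) = 3/√10 ∧
    deriv (fun s => energy s √(9/10)) √(5/10) = 0 ∧
    deriv (fun s => energy √(5/10) s) √(9/10) = 0 ∧
    energy √(5/10) √(9/10) = (128*√5/3)*π^3
  have ha : √(5/10)^2 = 1/2 := by rw [sq_sqrt (by norm_num)]; norm_num
  have hb : √(9/10)^2 = 9/10 := sq_sqrt (by norm_num)
  have hab : √(5/10) * √(9/10) = 3/2/√5 := by
    rw [eq_div_iff (by positivity), ← sqrt_mul (by norm_num), ← sqrt_mul (by norm_num),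
      show (3/2 : ℝ) = √((3/2)^2) from (sqrt_sq (by norm_num)).symm]
    norm_num
  refine ⟨?_, ?_, ?_, ?_, ?_⟩
  · rw [show (5/10 : ℝ) = 1/2 by norm_num, sqrt_div' _ (by norm_num), sqrt_one]
  · rw [sqrt_div' _ (by norm_num), show (9 : ℝ) = 3^2 by norm_num, sqrt_sq (by norm_num)]
  · refine deriv_energy_left_eq_zero (by positivity) ?_
    rw [ha, hb, energyDerivNumerator]
    norm_num
  · refine deriv_energy_right_eq_zero (by positivity) ?_
    rw [ha, hb, energyDerivNumerator]
    norm_num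
  · rw [energy_eq_energyNumerator, ha, hb, hab, energyNumerator]
    field_simp
    rw [sq_sqrt (by norm_num)]
    norm_num
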